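/- arXiv:0707.2834 — 5 statements merged into one kernel-verified Lean document; each statement's English description precedes it below -/
import Mathlib

section
/- Let ω : ℝ → ℝ be an odd function, non-negative on ℝ⁺, such that x ↦ ω(x)/x is non-decreasing on (0,∞). Then for all x, y ∈ ℝ, |ω(x) − ω(y)| ≥ ω(|x−y|/2). -/
/-!
Writing `ω x = x * (ω x / x)` and using that `ω x / x` is non-decreasing shows that `ω` is
superadditive on `[0, ∞)`, hence (being non-negative there) monotone on `[0, ∞)`. For `y ≤ x` of
the same sign, superadditivity gives `ω x - ω y ≥ ω (x - y) ≥ ω ((x - y) / 2)`, using oddness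
when both are negative. For `y < 0 < x`, one of `x`, `-y` is at least `(x - y) / 2`, and
`ω x - ω y = ω x + ω (-y)` dominates the `ω`-value of each of them.
-/

open Set

section RatioMonotone

variable {ω : ℝ → ℝ}

theorem add_le_of_monotoneOn_div (h0 : ω 0 = 0)
    (hmono : MonotoneOn (fun x => ω x / x) (Ioi 0)) {a b : ℝ} (ha : 0 ≤ a) (hb : 0 ≤ b) :
    ω a + ω b ≤ ω (a + b) := by
  rcases ha.eq_or_lt with rfl | ha
  · simp [h0]
  rcases hb.eq_or_lt with rfl | hb
  · simp [h0]
  have hab : 0 < a + b := by positivity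
  have hle : ∀ c, 0 < c → c ≤ a + b → ω c ≤ c * (ω (a + b) / (a + b)) := fun c hc hcab => by
    calc ω c = c * (ω c / c) := by field_simp
      _ ≤ c * (ω (a + b) / (a + b)) := mul_le_mul_of_nonneg_left (hmono hc hab hcab) hc.le
  calc ω a + ω b ≤ a * (ω (a + b) / (a + b)) + b * (ω (a + b) / (a + b)) :=
        add_le_add (hle a ha (by linarith)) (hle b hb (by linarith))
    _ = ω (a + b) := by field_simp

theorem monotoneOn_Ici_of_monotoneOn_div (h0 : ω 0 = 0) (hnonneg : ∀ x, 0 ≤ x → 0 ≤ ω x)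
    (hmono : MonotoneOn (fun x => ω x / x) (Ioi 0)) : MonotoneOn ω (Ici 0) := by
  intro a ha b _ hab
  calc ω a ≤ ω a + ω (b - a) := le_add_of_nonneg_right (hnonneg _ (sub_nonneg.2 hab))
    _ ≤ ω (a + (b - a)) := add_le_of_monotoneOn_div h0 hmono ha (sub_nonneg.2 hab)
    _ = ω b := by rw [add_sub_cancel]

variable (hodd : ∀ x, ω (-x) = -ω x) (hnonneg : ∀ x, 0 ≤ x → 0 ≤ ω x)
  (hmono : MonotoneOn (fun x => ω x / x) (Ioi 0))
include hodd

theorem map_zero_of_odd : ω 0 = 0 := by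
  have := hodd 0
  rw [neg_zero] at this
  linarith

include hnonneg hmono

theorem map_half_sub_le_sub_of_nonneg {x y : ℝ} (hy : 0 ≤ y) (hxy : y ≤ x) :
    ω ((x - y) / 2) ≤ ω x - ω y := by
  have h0 := map_zero_of_odd hodd
  have hsub : 0 ≤ x - y := sub_nonneg.2 hxy
  calc ω ((x - y) / 2) ≤ ω (x - y) :=
        monotoneOn_Ici_of_monotoneOn_div h0 hnonneg hmono (mem_Ici.2 (by linarith)) hsub (by linarith)
    _ ≤ ω x - ω y := by
        have := add_le_of_monotoneOn_div h0 hmono hy hsub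
        rw [add_sub_cancel] at this
        linarith

theorem map_half_sub_le_sub {x y : ℝ} (hxy : y ≤ x) : ω ((x - y) / 2) ≤ ω x - ω y := by
  have hmonoIci := monotoneOn_Ici_of_monotoneOn_div (map_zero_of_odd hodd) hnonneg hmono
  rcases le_total 0 y with hy | hy
  · exact map_half_sub_le_sub_of_nonneg hodd hnonneg hmono hy hxy
  rcases le_total x 0 with hx | hx
  · have := map_half_sub_le_sub_of_nonneg hodd hnonneg hmono (neg_nonneg.2 hx) (neg_le_neg hxy)
    rw [hodd, hodd, show (-y - -x) / 2 = (x - y) / 2 by ring] at this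
    linarith
  have hd : 0 ≤ (x - y) / 2 := by linarith
  have hωx := hnonneg x hx
  have hωy := hnonneg (-y) (neg_nonneg.2 hy)
  rw [hodd] at hωy
  rcases le_total ((x - y) / 2) x with hdx | hdy
  · linarith [hmonoIci hd hx hdx]
  · have := hmonoIci hd (neg_nonneg.2 hy) (by linarith)
    rw [hodd] at this
    linarith

end RatioMonotone

theorem omega_diff_ge (ω : ℝ → ℝ)
    (hodd : ∀ x : ℝ, ω (-x) = -ω x)
    (hnonneg : ∀ x : ℝ, 0 ≤ x → 0 ≤ ω x)
    (hmono : ∀ x y : ℝ, 0 < x → x ≤ y → ω x / x ≤ ω y / y) :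
    ∀ x y : ℝ, ω (|x - y| / 2) ≤ |ω x - ω y| := by
  have hmono' : MonotoneOn (fun x => ω x / x) (Ioi 0) := fun x hx y _ hxy => hmono x y hx hxy
  intro x y
  rcases le_total y x with hxy | hxy
  · rw [abs_of_nonneg (sub_nonneg.2 hxy)]
    exact (map_half_sub_le_sub hodd hnonneg hmono' hxy).trans (le_abs_self _)
  · rw [abs_sub_comm, abs_of_nonneg (sub_nonneg.2 hxy), abs_sub_comm]
    exact (map_half_sub_le_sub hodd hnonneg hmono' hxy).trans (le_abs_self _)
end

section
/- Let u = (u₁, …, u_N) ∈ ℝ^N with ∑ₖ α∘ω_p(u_k) ≤ h, where 1 ≤ p ≤ 2, ω_p(x) = max(x, x^p) for x ≥ 0 extended oddly, and α(t) = min(|t|, t²). Then u can be written as u = v + w with |v|₂ ≤ √h and |w|_p ≤ h^{1/p}, i.e., u ∈ √h·B₂ + h^{1/p}·B_p. -/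
noncomputable def alpha (u : ℝ) : ℝ := min |u| (u ^ 2)

noncomputable def omegap (p x : ℝ) : ℝ :=
  if 0 ≤ x then max x (x ^ p) else -max (-x) ((-x) ^ p)

lemma alpha_nonneg (u : ℝ) : 0 ≤ alpha u :=
  le_min (abs_nonneg _) (sq_nonneg _)

lemma alpha_neg (u : ℝ) : alpha (-u) = alpha u := by
  simp [alpha, abs_neg, neg_pow]

lemma omegap_neg (p x : ℝ) (hx : x < 0) : omegap p x = - omegap p (-x) := by
  simp [omegap, not_le.mpr hx, le_of_lt (neg_pos.mpr hx)]

lemma alpha_omegap_abs (p x : ℝ) : alpha (omegap p x) = alpha (omegap p |x|) := by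
  rcases le_or_gt 0 x with hx | hx
  · rw [abs_of_nonneg hx]
  · rw [abs_of_neg hx, omegap_neg p x hx, alpha_neg]

lemma small_le (p x : ℝ) (hp1 : 1 ≤ p) (hx : |x| ≤ 1) : x ^ 2 ≤ alpha (omegap p x) := by
  rw [alpha_omegap_abs, ← sq_abs]
  set y := |x| with hy
  have hy0 : 0 ≤ y := abs_nonneg x
  have hy1 : y ≤ 1 := hx
  have hω : omegap p y = max y (y ^ p) := by simp [omegap, hy0]
  set ω := max y (y ^ p) with hωdef
  have hω0 : 0 ≤ ω := le_trans hy0 (le_max_left _ _)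
  have hyω : y ≤ ω := le_max_left _ _
  rw [hω]
  refine le_min ?_ ?_
  · rw [abs_of_nonneg hω0]
    calc y ^ 2 = y * y := sq y
    _ ≤ 1 * y := by nlinarith
    _ = y := one_mul y
    _ ≤ ω := hyω
  · have : y ^ 2 ≤ ω ^ 2 := by nlinarith
    exact this

lemma big_le (p x : ℝ) (hp1 : 1 ≤ p) (hx : 1 ≤ |x|) : |x| ^ p ≤ alpha (omegap p x) := by
  rw [alpha_omegap_abs]
  set y := |x| with hy
  have hy0 : (0:ℝ) ≤ y := abs_nonneg x
  have hω : omegap p y = max y (y ^ p) := by simp [omegap, hy0]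
  set ω := max y (y ^ p) with hωdef
  have hpω : y ^ p ≤ ω := le_max_right _ _
  have h1p : (1:ℝ) ≤ y ^ p := Real.one_le_rpow hx (le_trans zero_le_one hp1)
  have hω1 : (1:ℝ) ≤ ω := le_trans h1p hpω
  have hω0 : 0 ≤ ω := le_trans zero_le_one hω1
  rw [hω]
  refine le_min ?_ ?_
  · rw [abs_of_nonneg hω0]; exact hpω
  · calc y ^ p ≤ ω := hpω
    _ = ω * 1 := (mul_one ω).symm
    _ ≤ ω * ω := by nlinarith
    _ = ω ^ 2 := (sq ω).symm

theorem decomposition_ball (N : ℕ) (p : ℝ) (hp1 : 1 ≤ p) (hp2 : p ≤ 2)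
    (u : Fin N → ℝ) (h : ℝ)
    (hsum : ∑ k, alpha (omegap p (u k)) ≤ h) :
    ∃ v w : Fin N → ℝ, u = v + w ∧
      (∑ k, |v k| ^ (2 : ℝ)) ^ ((1 : ℝ) / 2) ≤ Real.sqrt h ∧
      (∑ k, |w k| ^ p) ^ (1 / p) ≤ h ^ (1 / p) := by
  have hp0 : 0 < p := lt_of_lt_of_le one_pos hp1
  have hnn : ∀ k, 0 ≤ alpha (omegap p (u k)) := fun k => alpha_nonneg _
  have hh0 : 0 ≤ h := le_trans (Finset.sum_nonneg fun k _ => hnn k) hsum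
  refine ⟨fun k => if |u k| ≤ 1 then u k else 0,
          fun k => if |u k| ≤ 1 then 0 else u k, ?_, ?_, ?_⟩
  · funext k; by_cases hk : |u k| ≤ 1 <;> simp [hk]
  · -- ℓ² part
    have hsum2 : (∑ k, |if |u k| ≤ 1 then u k else 0| ^ (2:ℝ)) ≤ h := by
      refine le_trans (Finset.sum_le_sum fun k _ => ?_) hsum
      by_cases hk : |u k| ≤ 1
      · simp only [hk, if_true]
        have : |u k| ^ (2:ℝ) = (u k) ^ 2 := by
          rw [show ((2:ℝ)) = ((2:ℕ):ℝ) by norm_num, Real.rpow_natCast, sq_abs]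
        rw [this]
        exact small_le p (u k) hp1 hk
      · simp only [hk, if_false, abs_zero]
        rw [Real.zero_rpow (by norm_num)]
        exact hnn k
    have hs0 : 0 ≤ ∑ k, |if |u k| ≤ 1 then u k else 0| ^ (2:ℝ) :=
      Finset.sum_nonneg fun k _ => Real.rpow_nonneg (abs_nonneg _) _
    calc (∑ k, |if |u k| ≤ 1 then u k else 0| ^ (2:ℝ)) ^ ((1:ℝ)/2)
        ≤ h ^ ((1:ℝ)/2) := Real.rpow_le_rpow hs0 hsum2 (by norm_num)
      _ = Real.sqrt h := (Real.sqrt_eq_rpow h).symm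
  · -- ℓᵖ part
    have hsump : (∑ k, |if |u k| ≤ 1 then 0 else u k| ^ p) ≤ h := by
      refine le_trans (Finset.sum_le_sum fun k _ => ?_) hsum
      by_cases hk : |u k| ≤ 1
      · simp only [hk, if_true, abs_zero]
        rw [Real.zero_rpow (ne_of_gt hp0)]
        exact hnn k
      · simp only [hk, if_false]
        exact big_le p (u k) hp1 (le_of_lt (not_le.mp hk))
    have hs0 : 0 ≤ ∑ k, |if |u k| ≤ 1 then 0 else u k| ^ p :=
      Finset.sum_nonneg fun k _ => Real.rpow_nonneg (abs_nonneg _) _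
    exact Real.rpow_le_rpow hs0 hsump (by positivity)
end

section
/- Let μ be a probability measure on ℝ^d and ω : ℝ → ℝ an odd homeomorphism, non-negative on ℝ⁺, with x ↦ ω(x)/x non-decreasing on (0,∞). Let d_ω(x,y) = (∑ᵢ |ω(xᵢ) − ω(yᵢ)|²)^{1/2}. Then μ satisfies the Poincaré inequality Var_μ(f) ≤ C ∫ |∇f|²_{d_ω} dμ for all locally d_ω-Lipschitz f if and only if the pushforward measure ω_♯μ (coordinatewise image) satisfies the classical Poincaré inequality Var(g) ≤ C ∫ |∇g|²₂ with the same constant, where |∇f|(x) = limsup_{y→x} |f(x)−f(y)|/d(x,y). -/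
open MeasureTheory Filter

/-- The metric `d_ω(x,y) = (∑ᵢ |ω(xᵢ) - ω(yᵢ)|²)^{1/2}` on `ℝ^d`. -/
noncomputable def dOmega {d : ℕ} (ω : ℝ → ℝ) (x y : Fin d → ℝ) : ℝ :=
  Real.sqrt (∑ i, (ω (x i) - ω (y i)) ^ 2)

/-- The length of the gradient of `f` at `x` with respect to the distance `D`:
`|∇f|(x) = limsup_{y → x} |f(x) - f(y)| / D(x,y)`. -/
noncomputable def gradLen {d : ℕ} (D : (Fin d → ℝ) → (Fin d → ℝ) → ℝ)
    (f : (Fin d → ℝ) → ℝ) (x : Fin d → ℝ) : ℝ :=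
  limsup (fun y => |f x - f y| / D x y) (nhdsWithin x {x}ᶜ)

/-- `f` is locally Lipschitz with respect to the distance `D`. -/
def LocLipWith {d : ℕ} (D : (Fin d → ℝ) → (Fin d → ℝ) → ℝ)
    (f : (Fin d → ℝ) → ℝ) : Prop :=
  ∀ x, ∃ ε > (0 : ℝ), ∃ K : ℝ, ∀ y z, D x y < ε → D x z < ε → |f y - f z| ≤ K * D y z

/-- The coordinatewise homeomorphism `x ↦ (ω (x i))ᵢ`. -/
noncomputable def Phi (d : ℕ) (ω : ℝ ≃ₜ ℝ) : (Fin d → ℝ) ≃ₜ (Fin d → ℝ) :=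
  Homeomorph.piCongrRight fun _ => ω

/-- The same map as a measurable equivalence. -/
noncomputable def PhiM (d : ℕ) (ω : ℝ ≃ₜ ℝ) : (Fin d → ℝ) ≃ᵐ (Fin d → ℝ) :=
  (Phi d ω).toMeasurableEquiv

lemma dOmega_eq {d : ℕ} (ω : ℝ ≃ₜ ℝ) (x y : Fin d → ℝ) :
    dOmega ω x y = dOmega id (Phi d ω x) (Phi d ω y) := rfl

lemma gradLen_comp {d : ℕ} (ω : ℝ ≃ₜ ℝ) (g : (Fin d → ℝ) → ℝ) (x : Fin d → ℝ) :
    gradLen (dOmega (id : ℝ → ℝ)) g (Phi d ω x)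
      = gradLen (dOmega ω) (fun y => g (Phi d ω y)) x := by
  unfold gradLen
  rw [show (nhdsWithin (Phi d ω x) {Phi d ω x}ᶜ) = map (Phi d ω) (nhdsWithin x {x}ᶜ) from
    ((Phi d ω).map_punctured_nhds_eq x).symm, ← Filter.limsup_comp]
  rfl

lemma locLip_comp_iff {d : ℕ} (ω : ℝ ≃ₜ ℝ) (g : (Fin d → ℝ) → ℝ) :
    LocLipWith (dOmega ω) (fun y => g (Phi d ω y)) ↔ LocLipWith (dOmega (id : ℝ → ℝ)) g := by
  constructor
  · intro h x'
    obtain ⟨ε, hε, K, hK⟩ := h ((Phi d ω).symm x')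
    refine ⟨ε, hε, K, fun y z hy hz => ?_⟩
    have := hK ((Phi d ω).symm y) ((Phi d ω).symm z)
    simp only [dOmega_eq ω, Homeomorph.apply_symm_apply] at this
    simpa using this hy hz
  · intro h x
    obtain ⟨ε, hε, K, hK⟩ := h (Phi d ω x)
    exact ⟨ε, hε, K, fun y z hy hz => hK _ _ ((dOmega_eq ω x y) ▸ hy) ((dOmega_eq ω x z) ▸ hz)⟩

lemma variance_map {d : ℕ} (ω : ℝ ≃ₜ ℝ) (μ : Measure (Fin d → ℝ)) (g : (Fin d → ℝ) → ℝ) :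
    ProbabilityTheory.variance g (μ.map (PhiM d ω))
      = ProbabilityTheory.variance (fun y => g (Phi d ω y)) μ := by
  unfold ProbabilityTheory.variance ProbabilityTheory.evariance
  rw [MeasureTheory.lintegral_map_equiv, MeasureTheory.integral_map_equiv]
  rfl

theorem SGomega_iff_SG_pushforward (d : ℕ) (μ : Measure (Fin d → ℝ))
    [IsProbabilityMeasure μ] (C : ℝ) (ω : ℝ ≃ₜ ℝ)
    (hodd : ∀ x : ℝ, ω (-x) = -ω x)
    (hnonneg : ∀ x : ℝ, 0 ≤ x → 0 ≤ ω x)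
    (hmono : ∀ x y : ℝ, 0 < x → x ≤ y → ω x / x ≤ ω y / y) :
    (∀ f : (Fin d → ℝ) → ℝ, LocLipWith (dOmega ω) f →
        ProbabilityTheory.variance f μ ≤ C * ∫ x, (gradLen (dOmega ω) f x) ^ 2 ∂μ) ↔
    (∀ g : (Fin d → ℝ) → ℝ, LocLipWith (dOmega id) g →
        ProbabilityTheory.variance g (μ.map (fun x i => ω (x i)))
          ≤ C * ∫ x, (gradLen (dOmega id) g x) ^ 2 ∂(μ.map (fun x i => ω (x i)))) := by
  have hmap : μ.map (fun x i => ω (x i)) = μ.map (PhiM d ω) := rfl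
  constructor
  · intro H g hg
    have hf := H (fun y => g (Phi d ω y)) ((locLip_comp_iff ω g).2 hg)
    rw [hmap, variance_map, MeasureTheory.integral_map_equiv]
    simp_rw [show ∀ x, gradLen (dOmega (id : ℝ → ℝ)) g (PhiM d ω x)
        = gradLen (dOmega ω) (fun y => g (Phi d ω y)) x from gradLen_comp ω g]
    exact hf
  · intro H f hf
    set g : (Fin d → ℝ) → ℝ := fun y => f ((Phi d ω).symm y) with hgdef
    have hcomp : (fun y => g (Phi d ω y)) = f := by
      funext y; simp [hgdef]
    have hg : LocLipWith (dOmega (id : ℝ → ℝ)) g := by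
      rw [← locLip_comp_iff ω g, hcomp]; exact hf
    have := H g hg
    rw [hmap, variance_map, MeasureTheory.integral_map_equiv] at this
    simp_rw [show ∀ x, gradLen (dOmega (id : ℝ → ℝ)) g (PhiM d ω x)
        = gradLen (dOmega ω) (fun y => g (Phi d ω y)) x from gradLen_comp ω g, hcomp] at this
    exact this
end

section
/- Let μ be a probability measure on a Polish space X satisfying the symmetrized transportation-cost inequality 𝒯_c(ν₁, ν₂) ≤ 2H(ν₁|μ) + 2H(ν₂|μ) for all probability measures ν₁, ν₂. Then for all measurable sets A, B with μ(A), μ(B) > 0, one has μ(A)·μ(B) ≤ exp(−c(A,B)/2), where c(A,B) = inf_{x∈A, y∈B} c(x,y). -/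
open MeasureTheory
open scoped Classical

/-- Optimal transportation cost between `ν` and `μ` for the cost `c`. -/
noncomputable def transportCost {X : Type*} [MeasurableSpace X]
    (c : X → X → NNReal) (ν μ : Measure X) : ENNReal :=
  ⨅ (π : Measure (X × X)) (_ : π.map Prod.fst = ν ∧ π.map Prod.snd = μ),
    ∫⁻ p, (c p.1 p.2 : ENNReal) ∂π

/-- Relative entropy `H(ν | μ) = ∫ log(dν/dμ) dν` if `ν ≪ μ` (and the integral makes
sense), `+∞` otherwise. -/
noncomputable def relEntropy {X : Type*} [MeasurableSpace X] (ν μ : Measure X) : EReal :=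
  if  ν ≪ μ ∧ Integrable (llr ν μ) ν then ((∫ x, llr ν μ x ∂ν : ℝ) : EReal) else ⊤

/-!
Apply the transportation inequality to the conditioned measures `μ[|A]` and `μ[|B]`.
Any coupling of them lives on `A ×ˢ B`, so its cost is at least `c(A,B)`, while
`H(μ[|A] | μ) = -log μ(A)` because `μ[|A]` has the constant density `μ(A)⁻¹` on `A`.
Hence `c(A,B) ≤ -2 log μ(A) - 2 log μ(B)`, which exponentiates to the claim.
-/

open ProbabilityTheory

section

variable {X : Type*} [MeasurableSpace X]

lemma llr_cond_ae_eq (μ : Measure X) [SigmaFinite μ] {A : Set X} (hA : MeasurableSet A) :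
    llr μ[|A] μ =ᵐ[μ[|A]] fun _ => -Real.log (μ A).toReal := by
  have hdensity : μ[|A].rnDeriv μ =ᵐ[μ] A.indicator fun _ => (μ A)⁻¹ := by
    rw [ProbabilityTheory.cond, ← withDensity_const, ← withDensity_indicator hA]
    exact Measure.rnDeriv_withDensity μ (measurable_const.indicator hA)
  filter_upwards [cond_absolutelyContinuous.ae_le hdensity, ae_cond_mem hA] with x hx hxA
  rw [llr, hx, Set.indicator_of_mem hxA, ENNReal.toReal_inv, Real.log_inv]

lemma relEntropy_cond (μ : Measure X) [SigmaFinite μ] {A : Set X} (hA : MeasurableSet A)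
    (hA₀ : μ A ≠ 0) (hA_top : μ A ≠ ⊤) :
    relEntropy μ[|A] μ = ((-Real.log (μ A).toReal : ℝ) : EReal) := by
  have := cond_isProbabilityMeasure_of_finite hA₀ hA_top
  have hllr := llr_cond_ae_eq μ hA
  rw [relEntropy, if_pos ⟨cond_absolutelyContinuous, (integrable_const _).congr hllr.symm⟩,
    integral_congr_ae hllr, integral_const, probReal_univ, one_smul]

lemma iInf_le_transportCost (c : X → X → NNReal) {ν₁ ν₂ : Measure X} [IsProbabilityMeasure ν₁]
    {A B : Set X} (h₁ : ∀ᵐ x ∂ν₁, x ∈ A) (h₂ : ∀ᵐ y ∂ν₂, y ∈ B) :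
    ⨅ x ∈ A, ⨅ y ∈ B, (c x y : ENNReal) ≤ transportCost c ν₁ ν₂ := by
  refine le_iInf₂ fun π ⟨hπ₁, hπ₂⟩ => ?_
  have hπA : ∀ᵐ p ∂π, p.1 ∈ A := ae_of_ae_map measurable_fst.aemeasurable (hπ₁ ▸ h₁)
  have hπB : ∀ᵐ p ∂π, p.2 ∈ B := ae_of_ae_map measurable_snd.aemeasurable (hπ₂ ▸ h₂)
  have : IsProbabilityMeasure π :=
    (Measure.isProbabilityMeasure_map_iff measurable_fst.aemeasurable).mp (hπ₁ ▸ ‹_›)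
  calc ⨅ x ∈ A, ⨅ y ∈ B, (c x y : ENNReal)
      = ∫⁻ _, ⨅ x ∈ A, ⨅ y ∈ B, (c x y : ENNReal) ∂π := by
        rw [lintegral_const, measure_univ, mul_one]
    _ ≤ ∫⁻ p, (c p.1 p.2 : ENNReal) ∂π := by
        refine lintegral_mono_ae ?_
        filter_upwards [hπA, hπB] with p hp₁ hp₂
        exact (iInf₂_le p.1 hp₁).trans (iInf₂_le p.2 hp₂)

lemma mul_le_ofReal_exp_of_le_neg_log {a b : ENNReal} (ha₀ : a ≠ 0) (hb₀ : b ≠ 0)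
    (ha_top : a ≠ ⊤) (hb_top : b ≠ ⊤) {t : ℝ}
    (ht : t ≤ -2 * Real.log a.toReal - 2 * Real.log b.toReal) :
    a * b ≤ ENNReal.ofReal (Real.exp (-t / 2)) := by
  have ha : 0 < a.toReal := ENNReal.toReal_pos ha₀ ha_top
  have hb : 0 < b.toReal := ENNReal.toReal_pos hb₀ hb_top
  have hab : a.toReal * b.toReal = Real.exp (Real.log a.toReal + Real.log b.toReal) := by
    rw [Real.exp_add, Real.exp_log ha, Real.exp_log hb]
  rw [← ENNReal.ofReal_toReal ha_top, ← ENNReal.ofReal_toReal hb_top,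
    ← ENNReal.ofReal_mul ha.le, hab]
  exact ENNReal.ofReal_le_ofReal (Real.exp_le_exp.mpr (by linarith))

end

theorem meas_mul_meas_le_exp_general {X : Type*} [MeasurableSpace X]
    (μ : Measure X) [IsProbabilityMeasure μ] (c : X → X → NNReal)
    (hsym : ∀ ν₁ ν₂ : Measure X, IsProbabilityMeasure ν₁ → IsProbabilityMeasure ν₂ →
      (transportCost c ν₁ ν₂ : EReal)
        ≤ 2 * relEntropy ν₁ μ + 2 * relEntropy ν₂ μ) :
    ∀ A B : Set X, MeasurableSet A → MeasurableSet B → 0 < μ A → 0 < μ B →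
      μ A * μ B ≤ ENNReal.ofReal
        (Real.exp (-(⨅ x ∈ A, ⨅ y ∈ B, (c x y : ENNReal)).toReal / 2)) := by
  intro A B hA hB hμA hμB
  have := cond_isProbabilityMeasure (μ := μ) hμA.ne'
  have := cond_isProbabilityMeasure (μ := μ) hμB.ne'
  have hcost : ((⨅ x ∈ A, ⨅ y ∈ B, (c x y : ENNReal) : ENNReal) : EReal)
      ≤ ((2 * -Real.log (μ A).toReal + 2 * -Real.log (μ B).toReal : ℝ) : EReal) :=
    calc _ ≤ (transportCost c μ[|A] μ[|B] : EReal) :=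
          EReal.coe_ennreal_le_coe_ennreal_iff.mpr <|
            iInf_le_transportCost c (ae_cond_mem hA) (ae_cond_mem hB)
      _ ≤ 2 * relEntropy μ[|A] μ + 2 * relEntropy μ[|B] μ :=
          hsym _ _ inferInstance inferInstance
      _ = _ := by
          rw [relEntropy_cond μ hA hμA.ne' (measure_ne_top μ A),
            relEntropy_cond μ hB hμB.ne' (measure_ne_top μ B)]
          norm_cast
  refine mul_le_ofReal_exp_of_le_neg_log hμA.ne' hμB.ne' (measure_ne_top μ A)
    (measure_ne_top μ B) ?_
  have := EReal.toReal_le_toReal hcost (EReal.coe_ennreal_ne_bot _) (EReal.coe_ne_top _)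
  rw [EReal.toReal_coe_ennreal, EReal.toReal_coe] at this
  linarith

theorem meas_mul_meas_le_exp {X : Type*} [MeasurableSpace X] [TopologicalSpace X]
    [PolishSpace X] [BorelSpace X]
    (μ : Measure X) [IsProbabilityMeasure μ] (c : X → X → NNReal)
    (hc : Measurable fun p : X × X => c p.1 p.2)
    (hsym : ∀ ν₁ ν₂ : Measure X, IsProbabilityMeasure ν₁ → IsProbabilityMeasure ν₂ →
      (transportCost c ν₁ ν₂ : EReal)
        ≤ 2 * relEntropy ν₁ μ + 2 * relEntropy ν₂ μ) :
    ∀ A B : Set X, MeasurableSet A → MeasurableSet B → 0 < μ A → 0 < μ B →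
      μ A * μ B ≤ ENNReal.ofReal
        (Real.exp (-(⨅ x ∈ A, ⨅ y ∈ B, (c x y : ENNReal)).toReal / 2)) :=
  meas_mul_meas_le_exp_general μ c hsym
end

section
/- For T : [0,1] → ℝ⁺ non-decreasing with x ↦ T(x)/x non-increasing (extended by T(x)=T(1) for x ≥ 1), the function Θ(x) = x / T(1/log(1+1/x)) on (0,∞) is non-decreasing and sub-additive: Θ(x+y) ≤ Θ(x) + Θ(y) for all x, y > 0. -/
/-!
Write `h x = 1 / log (1 + 1/x)`, so that `Θ x = x / T (h x)`. Since `h` is non-decreasing and `T` is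
monotone, `Θ x / x = 1 / T (h x)` is non-increasing, which gives subadditivity. For monotonicity,
factor `Θ x = (x log (1 + 1/x)) · φ (h x)` with `φ u = u / T u`: the first factor is a secant slope
of the concave `log`, hence non-decreasing, and `φ` is non-decreasing because `T u / u` is
non-increasing on `(0, 1]` and `T` is constant on `[1, ∞)`.
-/

open Real Set

lemma one_div_log_one_add_one_div_pos {x : ℝ} (hx : 0 < x) : 0 < 1 / log (1 + 1 / x) :=
  one_div_pos.mpr <| log_pos <| lt_add_of_pos_right 1 <| one_div_pos.mpr hx

lemma monotoneOn_one_div_log_one_add_one_div :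
    MonotoneOn (fun x : ℝ => 1 / log (1 + 1 / x)) (Ioi 0) := by
  intro x hx y hy hxy
  have hy' : 0 < 1 / y := one_div_pos.mpr hy
  have hlog_le : log (1 + 1 / y) ≤ log (1 + 1 / x) :=
    log_le_log (by linarith) (by gcongr)
  exact one_div_le_one_div_of_le (log_pos (by linarith)) hlog_le

lemma monotoneOn_mul_log_one_add_one_div :
    MonotoneOn (fun x : ℝ => x * log (1 + 1 / x)) (Ioi 0) := by
  have hslope (x : ℝ) : x * log (1 + 1 / x) = slope log 1 (1 + 1 / x) := by
    simp [slope_def_field, mul_comm]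
  have hmem {z : ℝ} (hz : 0 < z) : 1 + 1 / z ∈ {w ∈ Ioi (0 : ℝ) | 1 < w} :=
    have : 0 < 1 / z := one_div_pos.mpr hz
    ⟨show (0 : ℝ) < 1 + 1 / z by linarith, by linarith⟩
  intro x hx y hy hxy
  simp only [hslope]
  exact strictConcaveOn_log_Ioi.concaveOn.antitoneOn_slope_gt (mem_Ioi.mpr one_pos)
    (hmem hy) (hmem hx) (by gcongr)

lemma monotoneOn_div_apply_of_antitoneOn_apply_div {T : ℝ → ℝ} (hpos : ∀ x, 0 < x → 0 < T x)
    (hanti : AntitoneOn (fun x => T x / x) (Ioc 0 1)) (hext : ∀ x, 1 ≤ x → T x = T 1) :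
    MonotoneOn (fun x => x / T x) (Ioi 0) := by
  have hsmall : MonotoneOn (fun x => x / T x) (Ioc 0 1) := by
    intro x hx y hy hxy
    have hTy : 0 < T y / y := div_pos (hpos y hy.1) hy.1
    simpa only [one_div_div] using one_div_le_one_div_of_le hTy (hanti hx hy hxy)
  have hlarge : MonotoneOn (fun x => x / T x) (Ici 1) := by
    intro x hx y hy hxy
    simp only [hext x hx, hext y hy]
    exact div_le_div_of_nonneg_right hxy (hpos 1 one_pos).le
  rw [← Ioc_union_Ici_eq_Ioi zero_lt_one]
  exact hsmall.union_right hlarge (isGreatest_Ioc zero_lt_one) isLeast_Ici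

lemma add_div_apply_add_le_of_monotoneOn {F : ℝ → ℝ} (hpos : ∀ x, 0 < x → 0 < F x)
    (hmono : MonotoneOn F (Ioi 0)) {x y : ℝ} (hx : 0 < x) (hy : 0 < y) :
    (x + y) / F (x + y) ≤ x / F x + y / F y := by
  have hxy : 0 < x + y := add_pos hx hy
  rw [add_div]
  gcongr
  exacts [hpos x hx, hmono hx hxy (by linarith), hpos y hy, hmono hy hxy (by linarith)]

theorem Theta_monotone_subadditive (T : ℝ → ℝ)
    (hpos : ∀ x : ℝ, 0 < x → 0 < T x)
    (hmono : MonotoneOn T (Set.Ioi 0))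
    (hanti : AntitoneOn (fun x => T x / x) (Set.Ioc 0 1))
    (hext : ∀ x : ℝ, 1 ≤ x → T x = T 1) :
    MonotoneOn (fun x : ℝ => x / T (1 / Real.log (1 + 1 / x))) (Set.Ioi 0) ∧
    ∀ x y : ℝ, 0 < x → 0 < y →
      (x + y) / T (1 / Real.log (1 + 1 / (x + y)))
        ≤ x / T (1 / Real.log (1 + 1 / x)) + y / T (1 / Real.log (1 + 1 / y)) := by
  have hmaps : MapsTo (fun x : ℝ => 1 / log (1 + 1 / x)) (Ioi 0) (Ioi 0) :=
    fun _ hx => one_div_log_one_add_one_div_pos hx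
  have hTh_pos (x : ℝ) (hx : 0 < x) : 0 < T (1 / log (1 + 1 / x)) := hpos _ (hmaps hx)
  refine ⟨?_, fun x y hx hy => add_div_apply_add_le_of_monotoneOn hTh_pos
    (hmono.comp monotoneOn_one_div_log_one_add_one_div hmaps) hx hy⟩
  have hfactor : EqOn
      ((fun x : ℝ => x * log (1 + 1 / x)) * fun x => 1 / log (1 + 1 / x) / T (1 / log (1 + 1 / x)))
      (fun x => x / T (1 / log (1 + 1 / x))) (Ioi 0) := by
    intro x hx
    have hlog : log (1 + 1 / x) ≠ 0 := (one_div_pos.mp (hmaps hx)).ne'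
    simp only [Pi.mul_apply]
    field_simp
  exact (monotoneOn_mul_log_one_add_one_div.mul
    ((monotoneOn_div_apply_of_antitoneOn_apply_div hpos hanti hext).comp
      monotoneOn_one_div_log_one_add_one_div hmaps)
    (fun x hx => (mul_pos hx (one_div_pos.mp (hmaps hx))).le)
    (fun x hx => (div_pos (hmaps hx) (hTh_pos x hx)).le)).congr hfactor
end
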